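/- Fix a ρ-slowly-moving reward-mean sequence μ, a temporal belief D, and an action a ∈ A with gap_{μ,D}(a) ≥ Δ > 0. Then for any sequence of recommendations I_1,…,I_T ∈ A, the D-weighted frequency of recommending a satisfies Σ_{t=1}^T D(t)·1[I_t = a] ≥ 1 − (PReg_D(μ) + 2ρ·Φ(D))/Δ. -/

import Mathlib

open Finset MeasureTheory ProbabilityTheory

noncomputable section

/-- A reward-mean sequence `μ` (with `μ t a` the mean reward of action `a` at time `t`)
is `ρ`-slowly-moving if consecutive mean vectors differ by at most `ρ` in sup-norm. -/
def SlowlyMoving {T K : ℕ} (μ : Fin T → Fin K → ℝ) (ρ : ℝ) : Prop :=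
  ∀ (t : Fin T) (ht : t.1 + 1 < T) (a : Fin K), |μ ⟨t.1 + 1, ht⟩ a - μ t a| ≤ ρ

/-- One-sided dispersion `Ψ_D(t) = E_{s∼D}|t-s|` of a temporal belief `D`. -/
def Psi {T : ℕ} (D : Fin T → ℝ) (t : Fin T) : ℝ :=
  ∑ s : Fin T, D s * |(t.1 : ℝ) - (s.1 : ℝ)|

/-- Max dispersion `Ψ_max(D)`: the supremum of `Ψ_D` over the smallest interval of
time steps containing the support of `D`. -/
def PsiMax {T : ℕ} (D : Fin T → ℝ) : ℝ :=
  sSup (Psi D '' {t | ∃ t₁ t₂ : Fin T, D t₁ ≠ 0 ∧ D t₂ ≠ 0 ∧ t₁ ≤ t ∧ t ≤ t₂})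

/-- Mean dispersion `Φ(D) = E_{s,t∼D}|s-t|`. -/
def PhiD {T : ℕ} (D : Fin T → ℝ) : ℝ :=
  ∑ s : Fin T, ∑ t : Fin T, D s * D t * |(s.1 : ℝ) - (t.1 : ℝ)|

/-- `W₂(D) = Σ_t D(t)²`. -/
def W2 {T : ℕ} (D : Fin T → ℝ) : ℝ := ∑ t : Fin T, (D t) ^ 2

lemma univ_ne {K : ℕ} (hK : 2 ≤ K) : (univ : Finset (Fin K)).Nonempty :=
  ⟨⟨0, by omega⟩, mem_univ _⟩

lemma erase_ne {K : ℕ} (hK : 2 ≤ K) (a : Fin K) :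
    ((univ : Finset (Fin K)).erase a).Nonempty := by
  rw [← Finset.card_pos, Finset.card_erase_of_mem (mem_univ a), Finset.card_univ,
    Fintype.card_fin]
  omega

/-- `gap_{μ,D}(a) = min_{b ≠ a} Σ_t D(t)(μ_{t,a} - μ_{t,b})`. -/
def gap {T K : ℕ} (hK : 2 ≤ K) (D : Fin T → ℝ) (μ : Fin T → Fin K → ℝ) (a : Fin K) : ℝ :=
  ((univ : Finset (Fin K)).erase a).inf' (erase_ne hK a)
    (fun b => ∑ t : Fin T, D t * (μ t a - μ t b))

/-- `D`-weighted external regret of the recommendation sequence `I` on rewards `u`: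
`max_{a} Σ_t D(t)(u_{t,a} - u_{t,I_t})`.  (Taking `u := μ` gives pseudo-regret.) -/
def extReg {T K : ℕ} (hK : 2 ≤ K) (D : Fin T → ℝ) (I : Fin T → Fin K)
    (u : Fin T → Fin K → ℝ) : ℝ :=
  (univ : Finset (Fin K)).sup' (univ_ne hK) (fun a => ∑ t : Fin T, D t * (u t a - u t (I t)))

/-- `D`-weighted swap regret: `max_{φ : A → A} Σ_t D(t)(u_{t,φ(I_t)} - u_{t,I_t})`. -/
def swapReg {T K : ℕ} (D : Fin T → ℝ) (I : Fin T → Fin K)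
    (u : Fin T → Fin K → ℝ) : ℝ :=
  (univ : Finset (Fin K → Fin K)).sup' ⟨id, mem_univ _⟩
    (fun φ => ∑ t : Fin T, D t * (u t (φ (I t)) - u t (I t)))

end

/-!
On a ρ-slowly-moving sequence the reward difference `μ_{t,a} - μ_{t,b}` is `2ρ`-Lipschitz in `t`,
so at every single time `t` it is at least its `D`-average minus `2ρ Ψ_D(t)`, hence at least
`Δ - 2ρ Ψ_D(t)` whenever `b ≠ a`. Every time step with `I_t ≠ a` therefore contributes at least
`D(t)(Δ - 2ρ Ψ_D(t))` to the regret against `a`; summing, and using `Σ_t D(t) Ψ_D(t) = Φ(D)`,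
gives `Δ (1 - Σ_t D(t) 1[I_t = a]) ≤ PReg_D(μ) + 2ρ Φ(D)`.
-/

namespace SlowlyMoving

variable {T K : ℕ} {μ : Fin T → Fin K → ℝ} {ρ : ℝ}

theorem abs_sub_le_of_le (hμ : SlowlyMoving μ ρ) (c : Fin K) {s t : Fin T} (hst : s ≤ t) :
    |μ t c - μ s c| ≤ ρ * ((t : ℝ) - s) := by
  suffices key : ∀ n, s.1 ≤ n → ∀ hn : n < T, |μ ⟨n, hn⟩ c - μ s c| ≤ ρ * ((n : ℝ) - s) from
    key t hst t.2
  refine Nat.le_induction (fun _ => by simp) fun n _ ih hn => ?_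
  have hstep := hμ ⟨n, by omega⟩ hn c
  calc |μ ⟨n + 1, hn⟩ c - μ s c|
      ≤ |μ ⟨n + 1, hn⟩ c - μ ⟨n, by omega⟩ c| + |μ ⟨n, by omega⟩ c - μ s c| :=
        abs_sub_le _ _ _
    _ ≤ ρ + ρ * ((n : ℝ) - s) := add_le_add hstep (ih (by omega))
    _ = ρ * (((n + 1 : ℕ) : ℝ) - s) := by push_cast; ring

theorem abs_sub_le (hμ : SlowlyMoving μ ρ) (c : Fin K) (s t : Fin T) :
    |μ s c - μ t c| ≤ ρ * |(s : ℝ) - t| := by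
  rcases le_total s t with hst | hts
  · have hle : (s : ℝ) ≤ t := by exact_mod_cast hst
    rw [abs_sub_comm, abs_of_nonpos (sub_nonpos.2 hle), neg_sub]
    exact hμ.abs_sub_le_of_le c hst
  · have hle : (t : ℝ) ≤ s := by exact_mod_cast hts
    rw [abs_of_nonneg (sub_nonneg.2 hle)]
    exact hμ.abs_sub_le_of_le c hts

/-- A negative `ρ` is only possible when `T ≤ 1`, where every `|s - t|` vanishes. -/
theorem mul_abs_sub_nonneg (hμ : SlowlyMoving μ ρ) (c : Fin K) (s t : Fin T) :
    0 ≤ ρ * |(s : ℝ) - t| :=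
  (abs_nonneg _).trans (hμ.abs_sub_le c s t)

theorem abs_sub_sub_le (hμ : SlowlyMoving μ ρ) (a b : Fin K) (s t : Fin T) :
    |(μ s a - μ s b) - (μ t a - μ t b)| ≤ 2 * ρ * |(s : ℝ) - t| := by
  have ha := hμ.abs_sub_le a s t
  have hb := hμ.abs_sub_le b s t
  calc |(μ s a - μ s b) - (μ t a - μ t b)| = |(μ s a - μ t a) - (μ s b - μ t b)| := by ring_nf
    _ ≤ |μ s a - μ t a| + |μ s b - μ t b| := abs_sub _ _
    _ ≤ 2 * ρ * |(s : ℝ) - t| := by linarith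

theorem mul_Psi_nonneg (hμ : SlowlyMoving μ ρ) {D : Fin T → ℝ} (hD0 : ∀ t, 0 ≤ D t)
    (c : Fin K) (t : Fin T) : 0 ≤ ρ * Psi D t := by
  simp only [Psi, mul_sum]
  exact sum_nonneg fun s _ =>
    mul_left_comm ρ (D s) _ ▸ mul_nonneg (hD0 s) (hμ.mul_abs_sub_nonneg c t s)

end SlowlyMoving

section Dispersion

variable {T : ℕ} {D : Fin T → ℝ}

theorem PhiD_eq_sum_mul_Psi (D : Fin T → ℝ) : PhiD D = ∑ t, D t * Psi D t := by
  simp only [PhiD, Psi, mul_sum]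
  rw [sum_comm]
  refine sum_congr rfl fun t _ => sum_congr rfl fun s _ => ?_
  rw [abs_sub_comm]
  ring

theorem sum_mul_le_add_mul_Psi (hD0 : ∀ t, 0 ≤ D t) (hD1 : ∑ t, D t = 1) {f : Fin T → ℝ}
    {L : ℝ} (t : Fin T) (hf : ∀ s, f s ≤ f t + L * |(t : ℝ) - s|) :
    ∑ s, D s * f s ≤ f t + L * Psi D t := by
  calc ∑ s, D s * f s ≤ ∑ s, D s * (f t + L * |(t : ℝ) - s|) :=
        sum_le_sum fun s _ => mul_le_mul_of_nonneg_left (hf s) (hD0 s)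
    _ = f t + L * Psi D t := by
        simp only [mul_add, sum_add_distrib, ← sum_mul, hD1, one_mul, Psi, mul_sum]
        congr 1
        exact sum_congr rfl fun s _ => by ring

end Dispersion

section Gap

variable {T K : ℕ} (hK : 2 ≤ K) {D : Fin T → ℝ} {μ : Fin T → Fin K → ℝ}

theorem gap_le_sum_of_ne {a b : Fin K} (hb : b ≠ a) :
    gap hK D μ a ≤ ∑ t, D t * (μ t a - μ t b) :=
  inf'_le _ (mem_erase.2 ⟨hb, mem_univ b⟩)

theorem sum_le_extReg (I : Fin T → Fin K) (a : Fin K) :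
    ∑ t, D t * (μ t a - μ t (I t)) ≤ extReg hK D I μ :=
  le_sup' (fun c => ∑ t, D t * (μ t c - μ t (I t))) (mem_univ a)

theorem gap_sub_le_of_slowlyMoving {ρ : ℝ} (hμ : SlowlyMoving μ ρ) (hD0 : ∀ t, 0 ≤ D t)
    (hD1 : ∑ t, D t = 1) {a b : Fin K} (hb : b ≠ a) (t : Fin T) :
    gap hK D μ a - 2 * ρ * Psi D t ≤ μ t a - μ t b := by
  have havg := sum_mul_le_add_mul_Psi hD0 hD1 (f := fun s => μ s a - μ s b) (L := 2 * ρ) t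
    fun s => by
      have := hμ.abs_sub_sub_le a b s t
      rw [abs_sub_comm (s : ℝ)] at this
      linarith [le_abs_self ((μ s a - μ s b) - (μ t a - μ t b))]
  linarith [gap_le_sum_of_ne hK (D := D) (μ := μ) hb]

theorem mul_one_sub_ite_le_of_slowlyMoving {ρ Δ : ℝ} (hμ : SlowlyMoving μ ρ)
    (hD0 : ∀ t, 0 ≤ D t) (hD1 : ∑ t, D t = 1) {a : Fin K} (hgap : Δ ≤ gap hK D μ a)
    (b : Fin K) (t : Fin T) :
    Δ * (1 - if b = a then 1 else 0) ≤ μ t a - μ t b + 2 * ρ * Psi D t := by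
  by_cases hb : b = a
  · simp only [hb, if_true, sub_self, mul_zero]
    linarith [hμ.mul_Psi_nonneg hD0 a t]
  · simp only [hb, if_false, sub_zero, mul_one]
    linarith [gap_sub_le_of_slowlyMoving hK hμ hD0 hD1 hb t]

end Gap

theorem stmt8_general {T K : ℕ} (hK : 2 ≤ K) (ρ Δ : ℝ) (hΔ : 0 < Δ)
    (μ : Fin T → Fin K → ℝ)
    (hslow : SlowlyMoving μ ρ)
    (D : Fin T → ℝ) (hD0 : ∀ t, 0 ≤ D t) (hD1 : ∑ t, D t = 1)
    (a : Fin K) (hgap : gap hK D μ a ≥ Δ)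
    (I : Fin T → Fin K) :
    ∑ t : Fin T, D t * (if I t = a then (1 : ℝ) else 0)
      ≥ 1 - (extReg hK D I μ + 2 * ρ * PhiD D) / Δ := by
  have hsum : Δ * (1 - ∑ t, D t * (if I t = a then (1 : ℝ) else 0))
      ≤ extReg hK D I μ + 2 * ρ * PhiD D := by
    calc Δ * (1 - ∑ t, D t * (if I t = a then (1 : ℝ) else 0))
        = ∑ t, D t * (Δ * (1 - if I t = a then 1 else 0)) := by
          simp only [mul_sub, mul_one, sum_sub_distrib, ← sum_mul, hD1, mul_sum]
          ring_nf
      _ ≤ ∑ t, D t * (μ t a - μ t (I t) + 2 * ρ * Psi D t) :=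
          sum_le_sum fun t _ => mul_le_mul_of_nonneg_left
            (mul_one_sub_ite_le_of_slowlyMoving hK hslow hD0 hD1 hgap (I t) t) (hD0 t)
      _ = ∑ t, D t * (μ t a - μ t (I t)) + 2 * ρ * PhiD D := by
          rw [PhiD_eq_sum_mul_Psi, mul_sum, ← sum_add_distrib]
          exact sum_congr rfl fun t _ => by ring
      _ ≤ extReg hK D I μ + 2 * ρ * PhiD D := by
          linarith [sum_le_extReg hK (D := D) (μ := μ) I a]
  linarith [(le_div_iff₀ hΔ).2 ((mul_comm _ _).trans_le hsum)]

/-- If gap_{μ,D}(a) ≥ Δ > 0, then for any recommendation sequence I,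
the D-weighted frequency of recommending a satisfies
Σ_t D(t)·1[I_t = a] ≥ 1 − (PReg_D(μ) + 2ρ·Φ(D))/Δ. -/
theorem stmt8 {T K : ℕ} (hK : 2 ≤ K) (ρ Δ : ℝ) (hΔ : 0 < Δ)
    (μ : Fin T → Fin K → ℝ) (hμ : ∀ t a, μ t a ∈ Set.Icc (0 : ℝ) 1)
    (hslow : SlowlyMoving μ ρ)
    (D : Fin T → ℝ) (hD0 : ∀ t, 0 ≤ D t) (hD1 : ∑ t, D t = 1)
    (a : Fin K) (hgap : gap hK D μ a ≥ Δ)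
    (I : Fin T → Fin K) :
    ∑ t : Fin T, D t * (if I t = a then (1 : ℝ) else 0)
      ≥ 1 - (extReg hK D I μ + 2 * ρ * PhiD D) / Δ :=
  stmt8_general hK ρ Δ hΔ μ hslow D hD0 hD1 a hgap I
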